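/- Let (g,·) be a finite-dimensional pre-Lie algebra over a field K of characteristic 0 and r^♯: g* → g a symmetric linear map (⟨r^♯(ξ),η⟩ = ⟨r^♯(η),ξ⟩ for all ξ,η ∈ g*) such that ⟪r,r⟫ = 0, where ⟪r,r⟫(ξ,η,ζ) := −⟨ξ, r^♯(η)·r^♯(ζ)⟩ + ⟨η, r^♯(ξ)·r^♯(ζ)⟩ + ⟨ζ, r^♯(ξ)·r^♯(η) − r^♯(η)·r^♯(ξ)⟩ for ξ,η,ζ ∈ g* (i.e. r is an s-matrix). Define ξ ·^r η := ad*_{r^♯(ξ)}η − R*_{r^♯(η)}ξ, where ⟨ad*_x ξ, y⟩ = −⟨ξ, x·y − y·x⟩ and ⟨R*_x ξ, y⟩ = −⟨ξ, y·x⟩. Then (g*, ·^r) is a pre-Lie algebra (the product ·^r satisfies the pre-Lie identity), and r^♯ is a pre-Lie algebra homomorphism from (g*, ·^r) to (g, ·), i.e. r^♯(ξ ·^r η) = r^♯(ξ)·r^♯(η) for all ξ,η ∈ g*. -/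
import Mathlib


/-- The product `ξ ·^r η := ad*_{r♯ ξ} η − R*_{r♯ η} ξ` on the dual space `g*`, where
`(ad*_x ξ)(y) = −ξ(x·y − y·x)` and `(R*_x ξ)(y) = −ξ(y·x)`. -/
def sProd {K g : Type*} [Field K] [AddCommGroup g] [Module K g]
    (mul : g →ₗ[K] g →ₗ[K] g) (rsharp : Module.Dual K g →ₗ[K] g)
    (ξ η : Module.Dual K g) : Module.Dual K g :=
  - η.comp (mul (rsharp ξ) - mul.flip (rsharp ξ)) + ξ.comp (mul.flip (rsharp η))

/-- If `r` is an `s`-matrix on a finite-dimensional pre-Lie algebra `(g,·)`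
(a symmetric element of `Sym²(g)` with `⟪r,r⟫ = 0`, identified with the symmetric map
`r♯ : g* → g`), then `·^r` is a pre-Lie product on `g*` and `r♯` is a pre-Lie algebra
homomorphism from `(g*, ·^r)` to `(g, ·)`. -/
theorem sMatrix_gives_preLie_and_hom {K : Type*} [Field K] [CharZero K]
    {g : Type*} [AddCommGroup g] [Module K g] [FiniteDimensional K g]
    (mul : g →ₗ[K] g →ₗ[K] g)
    (hpre : ∀ x y z : g,
      mul (mul x y) z - mul x (mul y z) = mul (mul y x) z - mul y (mul x z))
    (rsharp : Module.Dual K g →ₗ[K] g)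
    (hsymm : ∀ ξ η : Module.Dual K g, η (rsharp ξ) = ξ (rsharp η))
    (hs : ∀ ξ η ζ : Module.Dual K g,
      - ξ (mul (rsharp η) (rsharp ζ)) + η (mul (rsharp ξ) (rsharp ζ))
        + ζ (mul (rsharp ξ) (rsharp η) - mul (rsharp η) (rsharp ξ)) = 0) :
    (∀ ξ η ζ : Module.Dual K g,
      sProd mul rsharp (sProd mul rsharp ξ η) ζ - sProd mul rsharp ξ (sProd mul rsharp η ζ)
        = sProd mul rsharp (sProd mul rsharp η ξ) ζ
          - sProd mul rsharp η (sProd mul rsharp ξ ζ)) ∧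
    (∀ ξ η : Module.Dual K g,
      rsharp (sProd mul rsharp ξ η) = mul (rsharp ξ) (rsharp η)) := by
  have hs' : ∀ ξ η ζ : Module.Dual K g,
      - ξ (mul (rsharp η) (rsharp ζ)) + η (mul (rsharp ξ) (rsharp ζ))
        + ζ (mul (rsharp ξ) (rsharp η)) - ζ (mul (rsharp η) (rsharp ξ)) = 0 := by
    intro ξ η ζ
    have := hs ξ η ζ
    simp only [map_sub] at this
    linear_combination this
  have hhom : ∀ ξ η : Module.Dual K g,
      rsharp (sProd mul rsharp ξ η) = mul (rsharp ξ) (rsharp η) := by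
    intro ξ η
    rw [← sub_eq_zero, ← Module.forall_dual_apply_eq_zero_iff K]
    intro ζ
    rw [map_sub, hsymm]
    simp only [sProd, LinearMap.add_apply, LinearMap.neg_apply, LinearMap.comp_apply,
      LinearMap.sub_apply, LinearMap.flip_apply, map_sub]
    linear_combination hs' ζ η ξ - hs' ξ η ζ
  refine ⟨?_, hhom⟩
  intro ξ η ζ
  have h1 : ∀ (φ : Module.Dual K g) (x y z : g),
      φ (mul (mul x y) z) - φ (mul x (mul y z))
        = φ (mul (mul y x) z) - φ (mul y (mul x z)) := by
    intro φ x y z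
    have := congrArg φ (hpre x y z)
    simpa [map_sub] using this
  have hP : ∀ (ξ η : Module.Dual K g) (y : g), sProd mul rsharp ξ η y
      = -η (mul (rsharp ξ) y) + η (mul y (rsharp ξ)) + ξ (mul y (rsharp η)) := by
    intro ξ η y
    simp [sProd, map_sub]
    ring
  ext y
  simp only [LinearMap.sub_apply, hP, hhom, map_sub, map_add, map_neg]
  set a := rsharp ξ
  set b := rsharp η
  set c := rsharp ζ
  linear_combination - h1 ζ a b y + h1 ζ a y b - h1 ζ b y a + h1 η a y c - h1 ξ b y c
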